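/- Let 0 < c ≤ 1 and σ² > 0, set a = σ²(1−√c)², b = σ²(1+√c)², and let f_{c,σ²}(t) = √((t−a)(b−t))/(2πcσ²t) on [a, b]. Then c·(b/σ² − 1)·∫_a^b t/(b − t) · f_{c,σ²}(t) dt = 2c + c√c. (The integrand has an integrable singularity at t = b since f_{c,σ²} vanishes like √(b−t) there.) -/

import Mathlib

/-!
For `t ∈ (a, b]` the factor `t` cancels and the integrand becomes `√((t - a)/(b - t)) / (2πcσ²)`.
An antiderivative of `√((t - a)/(b - t))` is `(b - a)/2 · arcsin((2t - a - b)/(b - a)) - √((t - a)(b - t))`,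
so the integral equals `π(b - a)/(4πcσ²) = √c / c`, since `b - a = 4σ²√c`. Finally
`b/σ² - 1 = 2√c + c` and `c (2√c + c) √c / c = 2c + c√c`.
-/

open Real Set intervalIntegral MeasureTheory

lemma sqrt_one_sub_sq_div_sub {a b t : ℝ} (hab : a < b) :
    √(1 - ((2 * t - a - b) / (b - a)) ^ 2) = 2 * √((t - a) * (b - t)) / (b - a) := by
  have hba : 0 < b - a := sub_pos.2 hab
  have : 1 - ((2 * t - a - b) / (b - a)) ^ 2 = (2 / (b - a)) ^ 2 * ((t - a) * (b - t)) := by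
    field_simp; ring
  rw [this, sqrt_mul (by positivity), sqrt_sq (by positivity)]
  ring

lemma hasDerivAt_arcsin_sub_sqrt {a b t : ℝ} (hat : a < t) (htb : t < b) :
    HasDerivAt (fun t ↦ (b - a) / 2 * arcsin ((2 * t - a - b) / (b - a)) - √((t - a) * (b - t)))
      (√((t - a) * (b - t)) / (b - t)) t := by
  have hba : 0 < b - a := by linarith
  have hP : 0 < (t - a) * (b - t) := mul_pos (sub_pos.2 hat) (sub_pos.2 htb)
  have hu : HasDerivAt (fun t ↦ (2 * t - a - b) / (b - a)) (2 / (b - a)) t := by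
    simpa using ((((hasDerivAt_id t).const_mul 2).sub_const a).sub_const b).div_const (b - a)
  have hu_gt : -1 < (2 * t - a - b) / (b - a) := by rw [lt_div_iff₀ hba]; linarith
  have hu_lt : (2 * t - a - b) / (b - a) < 1 := by rw [div_lt_iff₀ hba]; linarith
  have hP' : HasDerivAt (fun t ↦ (t - a) * (b - t)) (a + b - 2 * t) t := by
    refine (((hasDerivAt_id' t).sub_const a).mul ((hasDerivAt_id' t).const_sub b)).congr_deriv ?_
    ring
  refine ((((hasDerivAt_arcsin hu_gt.ne' hu_lt.ne).comp t hu).const_mul ((b - a) / 2)).sub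
    (hP'.sqrt hP.ne')).congr_deriv ?_
  rw [sqrt_one_sub_sq_div_sub (hat.trans htb)]
  have hS : √((t - a) * (b - t)) ^ 2 = (t - a) * (b - t) := sq_sqrt hP.le
  have hbt : b - t ≠ 0 := (sub_pos.2 htb).ne'
  field_simp
  rw [hS]
  ring

theorem integral_sqrt_mul_sub_div_sub {a b : ℝ} (hab : a < b) :
    ∫ t in a..b, √((t - a) * (b - t)) / (b - t) = π * (b - a) / 2 := by
  set F := fun t ↦ (b - a) / 2 * arcsin ((2 * t - a - b) / (b - a)) - √((t - a) * (b - t))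
  have hF : ContinuousOn F (Icc a b) := by fun_prop
  have hF' : ∀ t ∈ Ioo a b, HasDerivAt F (√((t - a) * (b - t)) / (b - t)) t :=
    fun t ht ↦ hasDerivAt_arcsin_sub_sqrt ht.1 ht.2
  -- The integrand blows up at `b`; it is integrable as a nonnegative derivative.
  have hint : IntervalIntegrable (fun t ↦ √((t - a) * (b - t)) / (b - t)) volume a b :=
    (intervalIntegrable_iff_integrableOn_Ioc_of_le hab.le).2 <|
      integrableOn_deriv_of_nonneg hF hF' fun t ht ↦
        div_nonneg (sqrt_nonneg _) (sub_nonneg.2 ht.2.le)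
  rw [integral_eq_sub_of_hasDerivAt_of_le hab.le hF hF' hint]
  have hba : b - a ≠ 0 := (sub_pos.2 hab).ne'
  simp only [F, show (2 * b - a - b) / (b - a) = 1 by field_simp; ring,
    show (2 * a - a - b) / (b - a) = -1 by field_simp; ring, arcsin_one, arcsin_neg_one,
    sub_self, mul_zero, zero_mul, sqrt_zero]
  ring

theorem integral_div_sub_mul_sqrt_div {a b : ℝ} (ha : 0 ≤ a) (hab : a < b) (C : ℝ) :
    ∫ t in a..b, t / (b - t) * (√((t - a) * (b - t)) / (C * t)) = π * (b - a) / (2 * C) := by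
  have hcongr : EqOn (fun t ↦ t / (b - t) * (√((t - a) * (b - t)) / (C * t)))
      (fun t ↦ √((t - a) * (b - t)) / (b - t) / C) (uIcc a b) := by
    intro t ht
    rw [uIcc_of_le hab.le] at ht
    rcases eq_or_ne t 0 with rfl | ht0
    · obtain rfl : a = 0 := le_antisymm ht.1 ha
      simp
    · field_simp
  rw [integral_congr hcongr, intervalIntegral.integral_div, integral_sqrt_mul_sub_div_sub hab]
  ring

theorem stmt11_general (c s2 : ℝ) (hc : 0 < c) (hs2 : 0 < s2)
    (a b : ℝ) (ha : a = s2 * (1 - Real.sqrt c) ^ 2) (hb : b = s2 * (1 + Real.sqrt c) ^ 2) :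
    c * (b / s2 - 1) *
        ∫ t in a..b, t / (b - t) * (Real.sqrt ((t - a) * (b - t)) / (2 * Real.pi * c * s2 * t))
      = 2 * c + c * Real.sqrt c := by
  have hsqrt : √c ^ 2 = c := sq_sqrt hc.le
  have hba : b - a = 4 * s2 * √c := by rw [ha, hb]; ring
  have hb_div : b / s2 - 1 = 2 * √c + c := by
    rw [hb, mul_div_cancel_left₀ _ hs2.ne']; linear_combination hsqrt
  have hab : a < b := sub_pos.1 (hba ▸ by positivity)
  have ha0 : 0 ≤ a := ha ▸ by positivity
  rw [integral_div_sub_mul_sqrt_div ha0 hab, hba, hb_div]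
  field_simp
  linear_combination 8 * hsqrt

/-- Boundary value of the GIC increment under the simple spiked model: for `0 < c ≤ 1`,
`σ² > 0`, `a = σ²(1-√c)²`, `b = σ²(1+√c)²`, and Marčenko–Pastur density
`f_{c,σ²}(t) = √((t-a)(b-t))/(2πcσ²t)`, one has
`c(b/σ² - 1) ∫_a^b t/(b-t) f_{c,σ²}(t) dt = 2c + c√c`. -/
theorem stmt11 (c s2 : ℝ) (hc : 0 < c) (hc1 : c ≤ 1) (hs2 : 0 < s2)
    (a b : ℝ) (ha : a = s2 * (1 - Real.sqrt c) ^ 2) (hb : b = s2 * (1 + Real.sqrt c) ^ 2) :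
    c * (b / s2 - 1) *
        ∫ t in a..b, t / (b - t) * (Real.sqrt ((t - a) * (b - t)) / (2 * Real.pi * c * s2 * t))
      = 2 * c + c * Real.sqrt c :=
  stmt11_general c s2 hc hs2 a b ha hb
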